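/- arXiv:2002.08359 — 2 statements merged into one kernel-verified Lean document; each statement's English description precedes it below -/
import Mathlib

section
/- There exists a family H of pairwise disjoint Cantor sets in ℝ, each of Lebesgue measure zero, such that every nonempty open interval of ℝ contains continuum many members of H. -/
/-- A Cantor set in ℝ: nonempty, compact, totally disconnected, with no isolated points. -/
def IsCantorSet (C : Set ℝ) : Prop :=
  C.Nonempty ∧ IsCompact C ∧ IsTotallyDisconnected C ∧ Perfect C

/-!
The middle-thirds Cantor set is null and homeomorphic to `(ℕ → Bool) × (ℕ → Bool)`, so its
slices `{y} × (ℕ → Bool)` form a continuum of pairwise disjoint Cantor sets. Enumerate the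
rational intervals and choose greedily closed intervals `J n` inside the `n`-th one, each
missing the affine copies of the Cantor set in the earlier `J m`: a finite union of closed null
sets cannot cover an open interval. The family consists of the affine copies in all `J n` of all
the slices. Null subsets of `ℝ` contain no interval, hence are totally disconnected.
-/

open Set Filter Topology MeasureTheory Function
open AffineMap (lineMap lineMap_apply_ring' lineMap_injective)
open scoped Pointwise

instance Pi.perfectSpace {ι : Type*} {X : ι → Type*} [∀ i, TopologicalSpace (X i)] [Infinite ι]
    [∀ i, Nontrivial (X i)] : PerfectSpace (∀ i, X i) := by
  classical
  refine perfectSpace_iff_forall_not_isolated.2 fun x => ?_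
  choose y hy using fun i => exists_ne (x i)
  have : Tendsto (fun i => update x i (y i)) cofinite (𝓝[≠] x) := by
    refine tendsto_nhdsWithin_iff.2 ⟨tendsto_pi_nhds.2 fun j => tendsto_nhds_of_eventually_eq ?_,
      .of_forall fun i => ?_⟩
    · filter_upwards [eventually_cofinite_ne j] with i hi using update_of_ne hi.symm _ _
    · exact fun h => hy i (by simpa using congrFun h i)
  exact this.neBot

theorem preperfect_range_of_injective {X Y : Type*} [TopologicalSpace X] [TopologicalSpace Y]
    [PerfectSpace X] {f : X → Y} (hf : Continuous f) (hinj : Injective f) :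
    Preperfect (range f) := by
  rintro _ ⟨x, rfl⟩
  simpa using (PerfectSpace.univ_preperfect x (mem_univ x)).map hf.continuousAt hinj

theorem isTotallyDisconnected_of_volume_eq_zero {s : Set ℝ} (hs : volume s = 0) :
    IsTotallyDisconnected s := by
  refine isTotallyDisconnected_iff_lt.2 fun x _ y _ hxy => ?_
  obtain ⟨z, hz, hzs⟩ := not_subset.1 fun hsub =>
    isOpen_Ioo.measure_ne_zero volume (nonempty_Ioo.2 hxy) (measure_mono_null hsub hs)
  exact ⟨z, hzs, hz⟩

theorem isCantorSet_range {X : Type*} [TopologicalSpace X] [CompactSpace X] [PerfectSpace X]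
    [Nonempty X] {f : X → ℝ} (hf : Continuous f) (hinj : Injective f)
    (hnull : volume (range f) = 0) : IsCantorSet (range f) :=
  ⟨range_nonempty f, isCompact_range hf, isTotallyDisconnected_of_volume_eq_zero hnull,
    (isCompact_range hf).isClosed, preperfect_range_of_injective hf hinj⟩

theorem Real.volume_image_add_mul (a r : ℝ) (s : Set ℝ) :
    volume ((fun x => a + r * x) '' s) = ENNReal.ofReal |r| * volume s := by
  have : (fun x => a + r * x) '' s = a +ᵥ r • s := by
    rw [← image_smul, ← image_vadd, image_image]; rfl
  rw [this, measure_vadd, Measure.addHaar_smul, Module.finrank_self, pow_one]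

theorem Real.volume_image_lineMap_eq_zero (a b : ℝ) {s : Set ℝ} (hs : volume s = 0) :
    volume (lineMap a b '' s) = 0 := by
  have : (lineMap a b : ℝ → ℝ) = fun x => a + (b - a) * x := by
    funext x; rw [lineMap_apply_ring']; ring
  rw [this, Real.volume_image_add_mul, hs, mul_zero]

theorem volume_preCantorSet_le (n : ℕ) : volume (preCantorSet n) ≤ (2 / 3) ^ n := by
  induction n with
  | zero => simp
  | succ n ih =>
    have hthird (c : ℝ) : volume ((fun x => (c + x) / 3) '' preCantorSet n) =
        3⁻¹ * volume (preCantorSet n) := by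
      have : (fun x : ℝ => (c + x) / 3) = fun x => c / 3 + 3⁻¹ * x := by funext x; ring
      rw [this, Real.volume_image_add_mul, abs_of_pos (by norm_num),
        ENNReal.ofReal_inv_of_pos (by norm_num)]
      norm_num
    have h0 : (· / 3) = fun x : ℝ => (0 + x) / 3 := by simp
    calc volume (preCantorSet (n + 1))
        ≤ 3⁻¹ * volume (preCantorSet n) + 3⁻¹ * volume (preCantorSet n) := by
          rw [preCantorSet_succ, h0]
          exact (measure_union_le _ _).trans_eq (by rw [hthird, hthird])
      _ = 2 / 3 * volume (preCantorSet n) := by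
          rw [← two_mul, ← mul_assoc, ENNReal.div_eq_inv_mul]; ring
      _ ≤ (2 / 3) ^ (n + 1) := by
          rw [pow_succ']; gcongr

theorem volume_cantorSet : volume cantorSet = 0 := by
  refine le_antisymm (ge_of_tendsto' (ENNReal.tendsto_pow_atTop_nhds_zero_of_lt_one ?_)
    fun n => (measure_mono (iInter_subset _ n)).trans (volume_preCantorSet_le n)) zero_le
  rw [ENNReal.div_lt_iff] <;> norm_num

noncomputable def cantorSetHomeomorphProd : cantorSet ≃ₜ (ℕ → Bool) × (ℕ → Bool) :=
  cantorSetHomeomorphNatToBool.trans <|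
    (Homeomorph.piCongrLeft Equiv.natSumNatEquivNat).symm.trans
      Homeomorph.sumArrowHomeomorphProdArrow

/-- The copy in `[a, b]` of the slice `{y} × (ℕ → Bool)` of the Cantor set. -/
noncomputable def cantorPiece (a b : ℝ) (y : ℕ → Bool) : Set ℝ :=
  range fun z => lineMap a b (cantorSetHomeomorphProd.symm (y, z) : ℝ)

section cantorPiece

variable {a b : ℝ}

theorem cantorPiece_subset_image_cantorSet (y : ℕ → Bool) :
    cantorPiece a b y ⊆ lineMap a b '' cantorSet :=
  range_subset_iff.2 fun z => mem_image_of_mem _ (cantorSetHomeomorphProd.symm (y, z)).2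

theorem image_cantorSet_subset_Icc (hab : a ≤ b) : lineMap a b '' cantorSet ⊆ Icc a b := by
  rw [← segment_eq_Icc hab, segment_eq_image_lineMap]
  exact image_mono cantorSet_subset_unitInterval

theorem isCantorSet_cantorPiece (hab : a ≠ b) (y : ℕ → Bool) :
    IsCantorSet (cantorPiece a b y) ∧ volume (cantorPiece a b y) = 0 := by
  have hnull : volume (cantorPiece a b y) = 0 := measure_mono_null
    (cantorPiece_subset_image_cantorSet y) (Real.volume_image_lineMap_eq_zero a b volume_cantorSet)
  refine ⟨isCantorSet_range (by fun_prop) ?_ hnull, hnull⟩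
  exact (lineMap_injective ℝ hab).comp <| Subtype.val_injective.comp <|
    cantorSetHomeomorphProd.symm.injective.comp (Prod.mk_right_injective y)

theorem disjoint_cantorPiece (hab : a ≠ b) {y y' : ℕ → Bool} (hy : y ≠ y') :
    Disjoint (cantorPiece a b y) (cantorPiece a b y') := by
  rw [disjoint_left]
  rintro _ ⟨z, rfl⟩ ⟨z', h⟩
  have := cantorSetHomeomorphProd.symm.injective (Subtype.val_injective (lineMap_injective ℝ hab h))
  exact hy (congrArg Prod.fst this).symm

theorem cantorPiece_injective (hab : a ≠ b) : Injective (cantorPiece a b) := by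
  intro y y' h
  by_contra hy
  have := disjoint_cantorPiece hab hy
  rw [h, disjoint_self, bot_eq_empty] at this
  exact (range_nonempty _).ne_empty this

end cantorPiece

theorem exists_seq_forall_lt_of_forall_finset_exists {α : Type*} (P : ℕ → α → Prop)
    (r : α → α → Prop) (h : ∀ n (s : Finset α), ∃ y, P n y ∧ ∀ x ∈ s, r x y) :
    ∃ f : ℕ → α, (∀ n, P n (f n)) ∧ ∀ m n, m < n → r (f m) (f n) := by
  classical
  choose g hg using h
  let S : ℕ → Finset α := fun n => Nat.rec ∅ (fun k s => insert (g k s) s) n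
  have mem_S {m n : ℕ} (hmn : m < n) : g m (S m) ∈ S n := by
    induction n with
    | zero => omega
    | succ n ih =>
      rcases Nat.lt_succ_iff_lt_or_eq.1 hmn with h | rfl
      · exact Finset.mem_insert_of_mem (ih h)
      · exact Finset.mem_insert_self _ _
  exact ⟨fun n => g n (S n), fun n => (hg n _).1, fun m n hmn => (hg n _).2 _ (mem_S hmn)⟩

theorem exists_Icc_subset_diff_of_volume_eq_zero {U F : Set ℝ} (hU : IsOpen U)
    (hne : U.Nonempty) (hF : IsClosed F) (hF0 : volume F = 0) :
    ∃ a b, a < b ∧ Icc a b ⊆ U \ F := by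
  have hdiff : (U \ F).Nonempty := sdiff_nonempty.2 fun hUF =>
    hU.measure_ne_zero volume hne (measure_mono_null hUF hF0)
  obtain ⟨a, b, hab, hsub⟩ := (hU.sdiff hF).exists_Ioo_subset hdiff
  obtain ⟨c, hac, hcb⟩ := exists_between hab
  obtain ⟨d, hcd, hdb⟩ := exists_between hcb
  exact ⟨c, d, hcd, (Icc_subset_Ioo hac hdb).trans hsub⟩

theorem exists_seq_Icc_subset_disjoint (N : ℝ × ℝ → Set ℝ) (hN : ∀ I, IsClosed (N I))
    (hN0 : ∀ I, volume (N I) = 0) {U : ℕ → Set ℝ} (hU : ∀ n, IsOpen (U n))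
    (hne : ∀ n, (U n).Nonempty) :
    ∃ I : ℕ → ℝ × ℝ, (∀ n, (I n).1 < (I n).2 ∧ Icc (I n).1 (I n).2 ⊆ U n) ∧
      ∀ m n, m < n → Disjoint (Icc (I n).1 (I n).2) (N (I m)) := by
  refine exists_seq_forall_lt_of_forall_finset_exists (fun n I => I.1 < I.2 ∧ Icc I.1 I.2 ⊆ U n)
    (fun J I => Disjoint (Icc I.1 I.2) (N J)) fun n s => ?_
  have hclosed : IsClosed (⋃ J ∈ s, N J) := s.finite_toSet.isClosed_biUnion fun J _ => hN J
  have hnull : volume (⋃ J ∈ s, N J) = 0 :=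
    (measure_biUnion_null_iff s.countable_toSet).2 fun J _ => hN0 J
  obtain ⟨a, b, hab, hsub⟩ := exists_Icc_subset_diff_of_volume_eq_zero (hU n) (hne n) hclosed hnull
  refine ⟨(a, b), ⟨hab, hsub.trans sdiff_subset⟩, fun J hJ => ?_⟩
  exact disjoint_left.2 fun x hx hxJ => (hsub hx).2 (mem_biUnion hJ hxJ)

noncomputable def cantorFamily (I : ℕ → ℝ × ℝ) : Set (Set ℝ) :=
  range fun p : ℕ × (ℕ → Bool) => cantorPiece (I p.1).1 (I p.1).2 p.2

section cantorFamily

variable {I : ℕ → ℝ × ℝ}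

theorem isCantorSet_of_mem_cantorFamily (hI : ∀ n, (I n).1 < (I n).2) {C : Set ℝ}
    (hC : C ∈ cantorFamily I) :
    IsCantorSet C ∧ volume C = 0 := by
  obtain ⟨⟨n, y⟩, rfl⟩ := hC
  exact isCantorSet_cantorPiece (hI n).ne y

theorem pairwiseDisjoint_cantorFamily (hI : ∀ n, (I n).1 < (I n).2)
    (hdisj : ∀ m n, m < n →
      Disjoint (Icc (I n).1 (I n).2) (lineMap (I m).1 (I m).2 '' cantorSet)) :
    (cantorFamily I).PairwiseDisjoint id := by
  have hsep {m n : ℕ} (hmn : m < n) (y y' : ℕ → Bool) :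
      Disjoint (cantorPiece (I m).1 (I m).2 y) (cantorPiece (I n).1 (I n).2 y') :=
    (hdisj m n hmn).symm.mono (cantorPiece_subset_image_cantorSet y)
      ((cantorPiece_subset_image_cantorSet y').trans (image_cantorSet_subset_Icc (hI n).le))
  rintro _ ⟨⟨m, y⟩, rfl⟩ _ ⟨⟨n, y'⟩, rfl⟩ hne
  rcases lt_trichotomy m n with hmn | rfl | hmn
  · exact hsep hmn y y'
  · exact disjoint_cantorPiece (hI m).ne fun hy => hne (congrArg (cantorPiece _ _) hy)
  · exact (hsep hmn y' y).symm

theorem mk_cantorFamily_subset_eq (hI : ∀ n, (I n).1 < (I n).2) {n : ℕ} {a b : ℝ}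
    (hn : Icc (I n).1 (I n).2 ⊆ Ioo a b) :
    Cardinal.mk {C : Set ℝ // C ∈ cantorFamily I ∧ C ⊆ Ioo a b} = Cardinal.continuum := by
  refine le_antisymm ?_ ?_
  · calc _ ≤ Cardinal.mk (cantorFamily I) := Cardinal.mk_subtype_mono fun C hC => hC.1
      _ ≤ Cardinal.mk (ℕ × (ℕ → Bool)) := Cardinal.mk_range_le
      _ = Cardinal.continuum := by simp
  · have hsub (y : ℕ → Bool) : cantorPiece (I n).1 (I n).2 y ⊆ Ioo a b :=
      ((cantorPiece_subset_image_cantorSet y).trans (image_cantorSet_subset_Icc (hI n).le)).trans hn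
    calc Cardinal.continuum = Cardinal.mk (ℕ → Bool) := by simp
      _ ≤ _ := Cardinal.mk_le_of_injective (f := fun y =>
          ⟨cantorPiece (I n).1 (I n).2 y, ⟨(n, y), rfl⟩, hsub y⟩)
        fun y y' h => cantorPiece_injective (hI n).ne (congrArg Subtype.val h)

end cantorFamily

theorem exists_family_of_cantor_null_sets :
    ∃ H : Set (Set ℝ),
      (∀ C ∈ H, IsCantorSet C ∧ MeasureTheory.volume C = 0) ∧
      H.PairwiseDisjoint id ∧
      ∀ a b : ℝ, a < b →
        Cardinal.mk {C : Set ℝ // C ∈ H ∧ C ⊆ Set.Ioo a b} = Cardinal.continuum := by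
  have : Nonempty {p : ℚ × ℚ // p.1 < p.2} := ⟨⟨(0, 1), zero_lt_one⟩⟩
  obtain ⟨q, hq⟩ := exists_surjective_nat {p : ℚ × ℚ // p.1 < p.2}
  obtain ⟨I, hI, hdisj⟩ := exists_seq_Icc_subset_disjoint (fun J => lineMap J.1 J.2 '' cantorSet)
    (fun J => (isCompact_cantorSet.image (by fun_prop)).isClosed)
    (fun J => Real.volume_image_lineMap_eq_zero J.1 J.2 volume_cantorSet)
    (U := fun n => Ioo ((q n).1.1 : ℝ) (q n).1.2) (fun n => isOpen_Ioo)
    (fun n => nonempty_Ioo.2 (Rat.cast_lt.2 (q n).2))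
  refine ⟨cantorFamily I, fun C => isCantorSet_of_mem_cantorFamily (fun n => (hI n).1),
    pairwiseDisjoint_cantorFamily (fun n => (hI n).1) hdisj, fun a b hab => ?_⟩
  obtain ⟨r, har, hrb⟩ := exists_rat_btwn hab
  obtain ⟨s, hrs, hsb⟩ := exists_rat_btwn hrb
  obtain ⟨n, hn⟩ := hq ⟨(r, s), Rat.cast_lt.1 hrs⟩
  refine mk_cantorFamily_subset_eq (fun n => (hI n).1) ((hI n).2.trans ?_)
  rw [hn]
  exact Ioo_subset_Ioo har.le hsb.le
end

section
/- For every cardinal κ with 2 ≤ κ ≤ 2^ℵ₀, the real line can be partitioned into exactly κ mutually non-homeomorphic Bernstein sets. -/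
/-!
Enumerate in order type `𝔠` all pairs `(D, i)` of a colour `i` and a closed set `D ⊆ ℝ²` that no
cross `U × ℝ ∪ ℝ × U` with `#U < 𝔠` covers, and greedily pick in each `D` a point whose two
coordinates have not been used before; both coordinates get colour `i`. A closed uncountable
`F ⊆ ℝ` meets every colour class (take `D` the diagonal over `F`), and every class `B` has size
`𝔠` because the lines `y = x + t` give `B - B = ℝ`. If `e : B_a ≃ₜ B_b`, then the closure of the
graph of `e` is such a `D`, so it contains a point `(x, y)` with `x` and `y` of colour `a`; but
continuity of `e` forces `y = e x ∈ B_b`.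
-/

/-- A Bernstein set in ℝ: neither it nor its complement contains an uncountable closed set. -/
def IsBernsteinR (B : Set ℝ) : Prop :=
  ∀ F : Set ℝ, IsClosed F → ¬F.Countable → ¬F ⊆ B ∧ ¬F ⊆ Bᶜ

open Set Cardinal Function

universe u

section Selection

variable {α : Type u}

def EscapesSmallSets (κ : Cardinal.{u}) (D : Set (α × α)) : Prop :=
  ∀ U : Set α, #U < κ → ∃ p ∈ D, p.1 ∉ U ∧ p.2 ∉ U

theorem EscapesSmallSets.mono {κ : Cardinal.{u}} {D E : Set (α × α)}
    (hD : EscapesSmallSets κ D) (hDE : D ⊆ E) : EscapesSmallSets κ E := fun U hU =>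
  let ⟨p, hp, h₁, h₂⟩ := hD U hU
  ⟨p, hDE hp, h₁, h₂⟩

theorem escapesSmallSets_range {β : Type u} {κ : Cardinal.{u}} (hκ : ℵ₀ ≤ κ)
    {g : β → α × α} (h₁ : Injective (Prod.fst ∘ g)) (h₂ : Injective (Prod.snd ∘ g))
    (hβ : κ ≤ #β) : EscapesSmallSets κ (range g) := by
  intro U hU
  set V : Set β := (Prod.fst ∘ g) ⁻¹' U ∪ (Prod.snd ∘ g) ⁻¹' U
  have hV : #V < κ := (mk_union_le _ _).trans_lt <| add_lt_of_lt hκ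
    ((mk_preimage_of_injective _ _ h₁).trans_lt hU)
    ((mk_preimage_of_injective _ _ h₂).trans_lt hU)
  obtain ⟨b, hb⟩ : Vᶜ.Nonempty := nonempty_compl.2 fun hV_univ => by
    rw [hV_univ, mk_univ] at hV
    exact hV.not_ge hβ
  exact ⟨g b, mem_range_self b, fun h => hb (Or.inl h), fun h => hb (Or.inr h)⟩

theorem exists_pairwise_disjoint_selection {T : Type u} {κ : Cardinal.{u}} (hκ : ℵ₀ ≤ κ)
    (hT : #T ≤ κ) {D : T → Set (α × α)} (hD : ∀ t, EscapesSmallSets κ (D t)) :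
    ∃ z : T → α × α, (∀ t, z t ∈ D t) ∧
      Pairwise fun s t => Disjoint ({(z s).1, (z s).2} : Set α) {(z t).1, (z t).2} := by
  obtain ⟨ι⟩ : Nonempty (T ↪ κ.ord.ToType) := by rwa [← le_def, mk_ord_toType]
  let used (t : T) (prev : ∀ s, ι s < ι t → α × α) : Set α :=
    range (fun s : {s // ι s < ι t} => (prev s.1 s.2).1) ∪
      range fun s : {s // ι s < ι t} => (prev s.1 s.2).2
  have mk_used_lt (t : T) (prev : ∀ s, ι s < ι t → α × α) : #(used t prev) < κ := by
    have hpred : #{s // ι s < ι t} < κ := by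
      refine (mk_le_of_injective (f := fun s => (⟨ι s.1, s.2⟩ : Iio (ι t))) ?_).trans_lt ?_
      · exact fun s s' h => Subtype.ext (ι.injective (congrArg Subtype.val h))
      · exact (mk_Iio_lt (ι t) (by simp)).trans_eq (mk_ord_toType κ)
    exact (mk_union_le _ _).trans_lt
      (add_lt_of_lt hκ (mk_range_le.trans_lt hpred) (mk_range_le.trans_lt hpred))
  obtain ⟨z, hz_eq⟩ : ∃ z : T → α × α, ∀ t,
      z t = Classical.choose (hD t (used t fun s _ => z s) (mk_used_lt t fun s _ => z s)) :=
    ⟨_, (InvImage.wf ι wellFounded_lt).fix_eq fun t prev =>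
      Classical.choose (hD t (used t prev) (mk_used_lt t prev))⟩
  have hz (t : T) : z t ∈ D t ∧ (z t).1 ∉ used t (fun s _ => z s) ∧
      (z t).2 ∉ used t (fun s _ => z s) := by
    rw [hz_eq t]
    exact Classical.choose_spec (hD t (used t fun s _ => z s) (mk_used_lt t fun s _ => z s))
  have disjoint_of_lt {s t : T} (hst : ι s < ι t) :
      Disjoint ({(z s).1, (z s).2} : Set α) {(z t).1, (z t).2} := by
    rw [disjoint_left]
    rintro x hxs hxt
    have hx : x ∈ used t fun s _ => z s := by
      rcases hxs with rfl | rfl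
      exacts [Or.inl ⟨⟨s, hst⟩, rfl⟩, Or.inr ⟨⟨s, hst⟩, rfl⟩]
    rcases hxt with rfl | rfl
    exacts [(hz t).2.1 hx, (hz t).2.2 hx]
  refine ⟨z, fun t => (hz t).1, fun s t hst => ?_⟩
  rcases lt_or_gt_of_ne (ι.injective.ne hst) with h | h
  · exact disjoint_of_lt h
  · exact (disjoint_of_lt h).symm

theorem exists_coloring_of_escapesSmallSets {I : Type u} [Nonempty I] {κ : Cardinal.{u}}
    (hκ : ℵ₀ ≤ κ) (hI : #I ≤ κ) {𝒟 : Set (Set (α × α))} (h𝒟 : #𝒟 ≤ κ)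
    (hD : ∀ D ∈ 𝒟, EscapesSmallSets κ D) :
    ∃ col : α → I, ∀ D ∈ 𝒟, ∀ i, ∃ p ∈ D, col p.1 = i ∧ col p.2 = i := by
  classical
  have hT : #(𝒟 × I) ≤ κ := by
    simpa [mul_eq_self hκ] using mul_le_mul' h𝒟 hI
  obtain ⟨z, hzD, hdisj⟩ := exists_pairwise_disjoint_selection hκ hT
    (D := fun t : 𝒟 × I => (t.1 : Set (α × α))) fun t => hD t.1 t.1.2
  let col (x : α) : I :=
    if h : ∃ t, x ∈ ({(z t).1, (z t).2} : Set α) then h.choose.2 else Classical.arbitrary I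
  have hcol (t : 𝒟 × I) (x : α) (hx : x ∈ ({(z t).1, (z t).2} : Set α)) : col x = t.2 := by
    have h : ∃ t, x ∈ ({(z t).1, (z t).2} : Set α) := ⟨t, hx⟩
    have ht : h.choose = t := by
      by_contra hne
      exact disjoint_left.1 (hdisj hne) h.choose_spec hx
    simp only [col, dif_pos h, ht]
  refine ⟨col, fun D hD i => ⟨z (⟨D, hD⟩, i), hzD (⟨D, hD⟩, i), hcol _ _ (mem_insert _ _),
    hcol (⟨D, hD⟩, i) _ (mem_insert_of_mem _ rfl)⟩⟩

end Selection

section Topology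

open TopologicalSpace Topology

theorem mk_setOf_isClosed_le_continuum (X : Type u) [TopologicalSpace X]
    [SecondCountableTopology X] : #{F : Set X | IsClosed F} ≤ 𝔠 := by
  borelize X
  have hborel : borel X = MeasurableSpace.generateFrom (countableBasis X) :=
    (isBasis_countableBasis X).borel_eq_generateFrom
  calc #{F : Set X | IsClosed F} ≤ #{F : Set X | MeasurableSet F} :=
        mk_le_mk_of_subset fun F hF => hF.measurableSet
    _ ≤ 𝔠 := by
      rw [‹BorelSpace X›.measurable_eq, hborel]
      exact MeasurableSpace.cardinal_measurableSet_le_continuum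
        ((mk_le_aleph0_iff.2 (countable_countableBasis X).to_subtype).trans aleph0_le_continuum)

theorem IsClosed.continuum_le_mk {X : Type} [TopologicalSpace X] [PolishSpace X] {F : Set X}
    (hF : IsClosed F) (hunc : ¬F.Countable) : 𝔠 ≤ #F := by
  obtain ⟨f, hrange, -, hinj⟩ := hF.exists_nat_bool_injection_of_not_countable hunc
  simpa using mk_le_of_injective (f := fun x => (⟨f x, hrange (mem_range_self x)⟩ : F))
    fun a b h => hinj (congrArg Subtype.val h)

theorem eq_of_mem_closure_range_graph {X Y : Type*} [TopologicalSpace X] [TopologicalSpace Y]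
    [T2Space Y] {A : Set X} {f : A → Y} (hf : Continuous f) {x : X} {y : Y}
    (h : (x, y) ∈ closure (range fun a : A => ((a : X), f a))) (hx : x ∈ A) : y = f ⟨x, hx⟩ := by
  have hemb : IsEmbedding (Prod.map ((↑) : A → X) id) :=
    IsEmbedding.subtypeVal.prodMap (IsEmbedding.id (X := Y))
  have hgraph : IsClosed {p : A × Y | p.2 = f p.1} :=
    isClosed_eq continuous_snd (hf.comp continuous_fst)
  have himage :
      (range fun a : A => ((a : X), f a)) = Prod.map (↑) id '' {p : A × Y | p.2 = f p.1} := by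
    ext ⟨x', y'⟩
    simp [eq_comm]
  have hmem : ((⟨x, hx⟩ : A), y) ∈ closure {p : A × Y | p.2 = f p.1} := by
    rw [hemb.closure_eq_preimage_closure_image, ← himage]
    exact h
  exact (hgraph.closure_eq ▸ hmem : _)

end Topology

theorem mk_le_of_forall_exists_add_mem {G : Type u} [AddGroup G] [Infinite G] {B : Set G}
    (h : ∀ t, ∃ x ∈ B, x + t ∈ B) : #G ≤ #B := by
  have hsurj : Surjective fun p : B × B => -(p.1 : G) + p.2 := fun t => by
    obtain ⟨x, hx, hxt⟩ := h t
    exact ⟨(⟨x, hx⟩, ⟨x + t, hxt⟩), by simp⟩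
  by_contra! hlt
  exact (mk_le_of_surjective hsurj).not_gt
    (by simpa using mul_lt_of_lt (aleph0_le_mk G) hlt hlt)

section Coloring

variable {X I : Type u} [TopologicalSpace X]

def ColorsEscapingSets (col : X → I) : Prop :=
  ∀ S : Set (X × X), EscapesSmallSets 𝔠 S → ∀ i, ∃ p ∈ closure S, col p.1 = i ∧ col p.2 = i

theorem exists_colorsEscapingSets [SecondCountableTopology X] [Nonempty I] (hI : #I ≤ 𝔠) :
    ∃ col : X → I, ColorsEscapingSets col := by
  obtain ⟨col, hcol⟩ := exists_coloring_of_escapesSmallSets aleph0_le_continuum hI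
    (𝒟 := {D : Set (X × X) | IsClosed D ∧ EscapesSmallSets 𝔠 D})
    ((mk_le_mk_of_subset fun _ hD => hD.1).trans (mk_setOf_isClosed_le_continuum _))
    fun _ hD => hD.2
  exact ⟨col, fun S hS => hcol _ ⟨isClosed_closure, hS.mono subset_closure⟩⟩

end Coloring

namespace ColorsEscapingSets

variable {I : Type} {col : ℝ → I}

theorem exists_add_mem_fiber (hcol : ColorsEscapingSets col) {F : Set ℝ} (hF : IsClosed F)
    (hunc : ¬F.Countable) (t : ℝ) (i : I) : ∃ x ∈ F, col x = i ∧ col (x + t) = i := by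
  have hS : EscapesSmallSets 𝔠 (range fun x : F => ((x : ℝ), (x : ℝ) + t)) :=
    escapesSmallSets_range aleph0_le_continuum Subtype.val_injective
      ((add_left_injective t).comp Subtype.val_injective) (hF.continuum_le_mk hunc)
  obtain ⟨p, hp, hp₁, hp₂⟩ := hcol _ hS i
  have hclosure : closure (range fun x : F => ((x : ℝ), (x : ℝ) + t)) ⊆
      {p | p.1 ∈ F ∧ p.2 = p.1 + t} :=
    closure_minimal (by rintro _ ⟨x, rfl⟩; exact ⟨x.2, rfl⟩)
      ((hF.preimage continuous_fst).inter (isClosed_eq continuous_snd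
        (continuous_fst.add continuous_const)))
  obtain ⟨hpF, hpt⟩ := hclosure hp
  exact ⟨p.1, hpF, hp₁, hpt ▸ hp₂⟩

theorem continuum_le_mk_fiber (hcol : ColorsEscapingSets col) (i : I) :
    𝔠 ≤ #(col ⁻¹' {i}) := by
  rw [← mk_real]
  refine mk_le_of_forall_exists_add_mem fun t => ?_
  obtain ⟨x, -, hx, hxt⟩ := hcol.exists_add_mem_fiber isClosed_univ not_countable_univ t i
  exact ⟨x, hx, hxt⟩

theorem isEmpty_homeomorph_fiber (hcol : ColorsEscapingSets col) {a b : I} (hab : a ≠ b) :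
    IsEmpty (col ⁻¹' {a} ≃ₜ col ⁻¹' {b}) := by
  refine ⟨fun e => hab ?_⟩
  have hS : EscapesSmallSets 𝔠 (range fun x : col ⁻¹' {a} => ((x : ℝ), (e x : ℝ))) :=
    escapesSmallSets_range aleph0_le_continuum Subtype.val_injective
      (Subtype.val_injective.comp e.injective) (hcol.continuum_le_mk_fiber a)
  obtain ⟨p, hp, hp₁, hp₂⟩ := hcol _ hS a
  have hp_graph : p.2 = e ⟨p.1, hp₁⟩ :=
    eq_of_mem_closure_range_graph (continuous_subtype_val.comp e.continuous) hp hp₁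
  calc a = col p.2 := hp₂.symm
    _ = b := hp_graph ▸ (e ⟨p.1, hp₁⟩).2

theorem isBernsteinR_fiber [Nontrivial I] (hcol : ColorsEscapingSets col) (i : I) :
    IsBernsteinR (col ⁻¹' {i}) := by
  intro F hF hunc
  obtain ⟨j, hji⟩ := exists_ne i
  obtain ⟨x, hxF, hx, -⟩ := hcol.exists_add_mem_fiber hF hunc 0 j
  obtain ⟨y, hyF, hy, -⟩ := hcol.exists_add_mem_fiber hF hunc 0 i
  exact ⟨fun h => hji (hx.symm.trans (h hxF)), fun h => h hyF hy⟩

end ColorsEscapingSets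

theorem partition_into_kappa_nonhomeomorphic_bernstein_sets (κ : Cardinal)
    (h2 : 2 ≤ κ) (hc : κ ≤ Cardinal.continuum) :
    ∃ P : Set (Set ℝ), Cardinal.mk P = κ ∧ P.PairwiseDisjoint id ∧ ⋃₀ P = Set.univ ∧
      (∀ B ∈ P, IsBernsteinR B) ∧
      ∀ A ∈ P, ∀ B ∈ P, A ≠ B → IsEmpty (↥A ≃ₜ ↥B) := by
  have : Nontrivial κ.out :=
    one_lt_iff_nontrivial.1 (by rw [mk_out]; exact Cardinal.one_lt_two.trans_le h2)
  obtain ⟨col, hcol⟩ := exists_colorsEscapingSets (X := ℝ) (I := κ.out) (by rwa [mk_out])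
  have hsurj : Surjective col := fun i => by
    obtain ⟨x, -, hx, -⟩ := hcol.exists_add_mem_fiber isClosed_univ not_countable_univ 0 i
    exact ⟨x, hx⟩
  refine ⟨range fun i => col ⁻¹' {i}, ?_, ?_, ?_, ?_, ?_⟩
  · rw [mk_range_eq (fun i => col ⁻¹' {i})
      ((preimage_injective.2 hsurj).comp singleton_injective), mk_out]
  · rintro _ ⟨i, rfl⟩ _ ⟨j, rfl⟩ hne
    exact (disjoint_singleton.2 fun h => hne (by rw [h])).preimage col
  · rw [sUnion_range, ← preimage_iUnion, iUnion_of_singleton, preimage_univ]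
  · rintro _ ⟨i, rfl⟩
    exact hcol.isBernsteinR_fiber i
  · rintro _ ⟨a, rfl⟩ _ ⟨b, rfl⟩ hne
    exact hcol.isEmpty_homeomorph_fiber fun h => hne (by rw [h])
end
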